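/- arXiv:1009.3999 — 2 statements merged into one kernel-verified Lean document; each statement's English description precedes it below -/
import Mathlib

section
/- For the asymmetric random walk with 0 < q < p, p + q = 1, whose starting point X_0 is chosen uniformly at random from T_N = {0,1,…,N}, the scaled range R_N/N converges in distribution to the uniform distribution on [0,1]: for every β ∈ (0,1), lim_{N→∞} P(R_N ≥ βN) = 1 − β. -/
open Filter Topology

/-- Position of the nearest-neighbor walk after the steps `w` (`true` = one step right,
`false` = one step left), started from `x`. -/
def walkPos (x : ℤ) (w : List Bool) : ℤ :=
  x + (w.count true : ℤ) - (w.count false : ℤ)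

/-- `w` is the step sequence of a trajectory on `{0, 1, …, N}` started at `x` and run
exactly until the exit time `τ_N = T_0 ∧ T_N`: all positions strictly before the last
step lie strictly inside `(0, N)`, and the final position is `0` or `N`. -/
def IsExitPath (N : ℕ) (x : ℤ) (w : List Bool) : Prop :=
  (∀ k < w.length, 0 < walkPos x (w.take k) ∧ walkPos x (w.take k) < (N : ℤ)) ∧
    (walkPos x w = 0 ∨ walkPos x w = (N : ℤ))

/-- Probability weight of the step sequence `w` when each step goes right with
probability `p` and left with probability `1 - p`, independently. -/
noncomputable def wt (p : ℝ) (w : List Bool) : ℝ :=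
  p ^ w.count true * (1 - p) ^ w.count false

/-- `prob N p x S` is the probability, for the walk on `{0, …, N}` with right-step
probability `p` started at `x` and stopped at the exit time `τ_N`, that its stopped
trajectory (recorded as the step sequence up to time `τ_N`) satisfies `S`. -/
noncomputable def prob (N : ℕ) (p : ℝ) (x : ℤ) (S : List Bool → Prop) : ℝ :=
  ∑' w : List Bool, Set.indicator {w | IsExitPath N x w ∧ S w} (wt p) w

/-- Expectation of `f` of the stopped trajectory for the walk started at `x`. -/
noncomputable def expect (N : ℕ) (p : ℝ) (x : ℤ) (f : List Bool → ℝ) : ℝ :=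
  ∑' w : List Bool, Set.indicator {w | IsExitPath N x w} (fun w => wt p w * f w) w

/-- Probability for the walk whose starting point is uniformly distributed on
`{0, 1, …, N}`; the event `S` may depend on the starting point. -/
noncomputable def probUniform (N : ℕ) (p : ℝ) (S : ℤ → List Bool → Prop) : ℝ :=
  (∑ x ∈ Finset.range (N + 1), prob N p (x : ℤ) (S (x : ℤ))) / (N + 1)

/-- The set of sites visited by the stopped walk up to time `τ_N` (time `0` included). -/
def rangeSet (x : ℤ) (w : List Bool) : Finset ℤ :=
  (Finset.range (w.length + 1)).image fun k => walkPos x (w.take k)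

/-- The range `R_N`: the number of distinct sites visited up to the exit time. -/
def rangeCount (x : ℤ) (w : List Bool) : ℕ := (rangeSet x w).card

/-- The local time `G(y) = Σ_{k=0}^{τ_N} 1_{X_k = y}` of the stopped trajectory `w`. -/
def localTime (x y : ℤ) (w : List Bool) : ℕ :=
  ((Finset.range (w.length + 1)).filter fun k => walkPos x (w.take k) = y).card

/-- The event `T_y < τ_N`: the walk started at `x` visits `y` at some time
`k ≥ 1` strictly before the end of the stopped trajectory `w`. -/
def hitsBefore (x y : ℤ) (w : List Bool) : Prop :=
  ∃ k, 1 ≤ k ∧ k < w.length ∧ walkPos x (w.take k) = y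

attribute [local instance] Classical.propDecidable

lemma wt_nil (p : ℝ) : wt p [] = 1 := by simp [wt]

lemma wt_nonneg {p : ℝ} (h0 : 0 ≤ p) (h1 : p ≤ 1) (w : List Bool) : 0 ≤ wt p w := by
  have : (0:ℝ) ≤ 1 - p := by linarith
  exact mul_nonneg (pow_nonneg h0 _) (pow_nonneg this _)

lemma wt_append (p : ℝ) (u v : List Bool) : wt p (u ++ v) = wt p u * wt p v := by
  simp [wt, List.count_append, pow_add]; ring

lemma wt_concat (p : ℝ) (w : List Bool) (b : Bool) :
    wt p (w ++ [b]) = wt p w * (if b then p else 1 - p) := by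
  cases b <;> simp [wt_append, wt] <;> ring

lemma walkPos_nil (x : ℤ) : walkPos x [] = x := by simp [walkPos]

lemma walkPos_append (x : ℤ) (u v : List Bool) :
    walkPos x (u ++ v) = walkPos (walkPos x u) v := by
  simp [walkPos, List.count_append]; ring

lemma walkPos_concat (x : ℤ) (w : List Bool) (b : Bool) :
    walkPos x (w ++ [b]) = walkPos x w + (if b then 1 else -1) := by
  cases b <;> simp [walkPos_append, walkPos] <;> ring

lemma walkPos_replicate_true (x : ℤ) (n : ℕ) :
    walkPos x (List.replicate n true) = x + n := by
  simp [walkPos, List.count_replicate]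

lemma wt_replicate_true (p : ℝ) (n : ℕ) : wt p (List.replicate n true) = p ^ n := by
  simp [wt, List.count_replicate]

section B
variable {x : ℤ} {p : ℝ}
attribute [local instance] Classical.propDecidable

/-- All words of length n. -/
def allWords : ℕ → Finset (List Bool)
  | 0 => {[]}
  | n+1 => (allWords n).biUnion (fun w => {w ++ [false], w ++ [true]})

lemma mem_allWords {n : ℕ} {w : List Bool} : w ∈ allWords n ↔ w.length = n := by
  induction n generalizing w with
  | zero => simp [allWords, List.length_eq_zero_iff]
  | succ n ih =>
    simp only [allWords, Finset.mem_biUnion, Finset.mem_insert, Finset.mem_singleton]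
    constructor
    · rintro ⟨u, hu, h | h⟩ <;> subst h <;> simp [ih.mp hu]
    · intro h
      rcases List.eq_nil_or_concat w with rfl | ⟨u, b, rfl⟩
      · simp at h
      · refine ⟨u, ih.mpr ?_, ?_⟩
        · simpa using h
        · cases b <;> simp
end B

section C
attribute [local instance] Classical.propDecidable

lemma sum_allWords_succ (n : ℕ) (g : List Bool → ℝ) :
    ∑ w ∈ allWords (n+1), g w
      = ∑ w ∈ allWords n, (g (w ++ [false]) + g (w ++ [true])) := by
  rw [show allWords (n+1) = (allWords n).biUnion (fun w => {w ++ [false], w ++ [true]}) from rfl]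
  rw [Finset.sum_biUnion]
  · refine Finset.sum_congr rfl fun w _ => ?_
    rw [Finset.sum_pair (by simp)]
  · intro a ha b hb hab
    simp only [Finset.disjoint_left, Finset.mem_insert, Finset.mem_singleton]
    have hl : a.length = b.length := by
      rw [mem_allWords.mp (by exact_mod_cast ha), mem_allWords.mp (by exact_mod_cast hb)]
    rintro w (rfl | rfl) (h | h) <;>
      first
      | exact hab (List.append_inj_left h hl)
      | simpa using List.append_inj_right h hl
end C

section D
attribute [local instance] Classical.propDecidable

/-- A "flow" on the binary tree: mass splits among children. -/
def IsFlow (g : List Bool → ℝ) : Prop :=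
  ∀ w, g w = g (w ++ [false]) + g (w ++ [true])

lemma flow_sum {g : List Bool → ℝ} (hg : IsFlow g) (n : ℕ) (u : List Bool) :
    ∑ v ∈ allWords n, g (u ++ v) = g u := by
  induction n generalizing u with
  | zero => simp [allWords]
  | succ n ih =>
    rw [sum_allWords_succ]
    have : ∀ v : List Bool, u ++ (v ++ [false]) = (u ++ v) ++ [false] := by simp
    calc ∑ v ∈ allWords n, (g (u ++ (v ++ [false])) + g (u ++ (v ++ [true])))
        = ∑ v ∈ allWords n, g (u ++ v) := by
          refine Finset.sum_congr rfl fun v _ => ?_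
          rw [show u ++ (v ++ [false]) = (u ++ v) ++ [false] by simp,
             show u ++ (v ++ [true]) = (u ++ v) ++ [true] by simp, ← hg]
      _ = g u := ih u

/-- Extensions of `w` by all words of length `k`. -/
def extWords (w : List Bool) (k : ℕ) : Finset (List Bool) :=
  (allWords k).image (fun v => w ++ v)

lemma sum_extWords {g : List Bool → ℝ} (hg : IsFlow g) (w : List Bool) (k : ℕ) :
    ∑ u ∈ extWords w k, g u = g w := by
  rw [extWords, Finset.sum_image (by intro a _ b _ h; exact List.append_cancel_left h)]
  exact flow_sum hg k w

lemma extWords_subset {w : List Bool} {k L : ℕ} (h : w.length + k = L) :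
    extWords w k ⊆ allWords L := by
  intro u hu
  rcases Finset.mem_image.mp hu with ⟨v, hv, rfl⟩
  rw [mem_allWords]
  simp [mem_allWords.mp hv, h]

lemma prefix_of_mem_extWords {w u : List Bool} {k : ℕ} (h : u ∈ extWords w k) : w <+: u := by
  rcases Finset.mem_image.mp h with ⟨v, _, rfl⟩
  exact ⟨v, rfl⟩

/-- Kraft-type inequality for prefix-free finite sets and nonnegative flows. -/
lemma kraft {g : List Bool → ℝ} (hg : IsFlow g) (hg0 : ∀ w, 0 ≤ g w)
    {F : Finset (List Bool)}
    (hpf : ∀ w₁ ∈ F, ∀ w₂ ∈ F, w₁ <+: w₂ → w₁ = w₂) :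
    ∑ w ∈ F, g w ≤ g [] := by
  obtain ⟨L, hL⟩ : ∃ L, ∀ w ∈ F, w.length ≤ L :=
    ⟨F.sup List.length, fun w hw => Finset.le_sup hw⟩
  have hdisj : ∀ w₁ ∈ F, ∀ w₂ ∈ F, w₁ ≠ w₂ →
      Disjoint (extWords w₁ (L - w₁.length)) (extWords w₂ (L - w₂.length)) := by
    intro w₁ h₁ w₂ h₂ hne
    rw [Finset.disjoint_left]
    intro u hu₁ hu₂
    rcases List.prefix_or_prefix_of_prefix (prefix_of_mem_extWords hu₁)
      (prefix_of_mem_extWords hu₂) with h | h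
    · exact hne (hpf _ h₁ _ h₂ h)
    · exact hne (hpf _ h₂ _ h₁ h).symm
  calc ∑ w ∈ F, g w = ∑ w ∈ F, ∑ u ∈ extWords w (L - w.length), g u := by
        refine Finset.sum_congr rfl fun w _ => (sum_extWords hg w _).symm
    _ = ∑ u ∈ F.biUnion (fun w => extWords w (L - w.length)), g u :=
        (Finset.sum_biUnion (fun w₁ h₁ w₂ h₂ => hdisj w₁ (by exact_mod_cast h₁) w₂ (by exact_mod_cast h₂))).symm
    _ ≤ ∑ u ∈ allWords L, g u := by
        refine Finset.sum_le_sum_of_subset_of_nonneg ?_ (fun u _ _ => hg0 u)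
        intro u hu
        rcases Finset.mem_biUnion.mp hu with ⟨w, hw, hu'⟩
        have : w.length + (L - w.length) = L := by have := hL w hw; omega
        exact extWords_subset this hu'
    _ = g [] := by simpa using flow_sum hg L []
end D

section E
attribute [local instance] Classical.propDecidable

lemma isFlow_wt {p : ℝ} : IsFlow (wt p) := by
  intro w; rw [wt_concat, wt_concat]; simp; ring

/-- The harmonic-weighted flow `wt(w) · r^(position)`. -/
noncomputable def hwt (p : ℝ) (x : ℤ) (r : ℝ) (w : List Bool) : ℝ :=
  wt p w * r ^ (walkPos x w)

lemma isFlow_hwt {p r : ℝ} (hr : 0 < r) (hharm : p * r + (1 - p) * r⁻¹ = 1) (x : ℤ) :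
    IsFlow (hwt p x r) := by
  intro w
  have hr0 : r ≠ 0 := ne_of_gt hr
  simp only [hwt, wt_concat, walkPos_concat, if_true, if_false, Bool.false_eq_true,
    zpow_add₀ hr0, zpow_one, zpow_neg, zpow_one]
  linear_combination (-(wt p w * r ^ walkPos x w)) * hharm

lemma hwt_nonneg {p r : ℝ} (h0 : 0 ≤ p) (h1 : p ≤ 1) (hr : 0 < r) (x : ℤ) (w : List Bool) :
    0 ≤ hwt p x r w := mul_nonneg (wt_nonneg h0 h1 w) (le_of_lt (zpow_pos hr _))
end E

section ExitAPI
attribute [local instance] Classical.propDecidable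

lemma take_of_prefix {u w : List Bool} (h : u <+: w) {k : ℕ} (hk : k ≤ u.length) :
    w.take k = u.take k := by
  rcases h with ⟨v, rfl⟩
  exact List.take_append_of_le_length hk

lemma exitPath_prefix_eq {N : ℕ} {x : ℤ} {u w : List Bool}
    (hu : IsExitPath N x u) (hw : IsExitPath N x w) (h : u <+: w) : u = w := by
  rcases lt_or_eq_of_le h.length_le with hl | hl
  · exfalso
    have h2 := hw.1 u.length hl
    rw [take_of_prefix h (le_refl _), List.take_length] at h2
    rcases hu.2 with h3 | h3 <;> rw [h3] at h2 <;> [exact absurd h2.1 (by omega); exact absurd h2.2 (by omega)]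
  · exact h.eq_of_length hl

lemma exit_prefixfree {N : ℕ} {x : ℤ} {G : Finset (List Bool)}
    (hG : ∀ w ∈ G, IsExitPath N x w) :
    ∀ w₁ ∈ G, ∀ w₂ ∈ G, w₁ <+: w₂ → w₁ = w₂ := by
  intro w₁ h₁ w₂ h₂ h
  exact exitPath_prefix_eq (hG w₁ h₁) (hG w₂ h₂) h

noncomputable def probFun (N : ℕ) (p : ℝ) (x : ℤ) (S : List Bool → Prop) : List Bool → ℝ :=
  Set.indicator {w | IsExitPath N x w ∧ S w} (wt p)

lemma probFun_nonneg {N p x S} (h0 : 0 ≤ p) (h1 : p ≤ 1) (w : List Bool) :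
    0 ≤ probFun N p x S w :=
  Set.indicator_nonneg (fun w _ => wt_nonneg h0 h1 w) w

lemma sum_probFun_le_one {N p x S} (h0 : 0 ≤ p) (h1 : p ≤ 1) (F : Finset (List Bool)) :
    ∑ w ∈ F, probFun N p x S w ≤ 1 := by
  rw [probFun, Finset.sum_indicator_eq_sum_filter]
  calc ∑ w ∈ F.filter (fun w => w ∈ {w | IsExitPath N x w ∧ S w}), wt p w ≤ wt p [] :=
        kraft isFlow_wt (wt_nonneg h0 h1)
          (exit_prefixfree fun w hw => (Set.mem_setOf_eq ▸ (Finset.mem_filter.mp hw).2).1)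
    _ = 1 := wt_nil p

lemma summable_probFun {N p x S} (h0 : 0 ≤ p) (h1 : p ≤ 1) :
    Summable (probFun N p x S) :=
  summable_of_sum_le (fun w => probFun_nonneg h0 h1 w) (sum_probFun_le_one h0 h1)

lemma prob_eq_tsum_probFun (N p x S) : prob N p x S = ∑' w, probFun N p x S w := rfl

lemma prob_nonneg {N p x S} (h0 : 0 ≤ p) (h1 : p ≤ 1) : 0 ≤ prob N p x S :=
  tsum_nonneg (fun w => probFun_nonneg h0 h1 w)

lemma prob_le_one {N p x S} (h0 : 0 ≤ p) (h1 : p ≤ 1) : prob N p x S ≤ 1 :=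
  tsum_le_of_sum_le' zero_le_one (sum_probFun_le_one h0 h1)

lemma prob_mono {N p x} {S S' : List Bool → Prop} (h0 : 0 ≤ p) (h1 : p ≤ 1)
    (h : ∀ w, IsExitPath N x w → S w → S' w) : prob N p x S ≤ prob N p x S' := by
  refine Summable.tsum_le_tsum (fun w => ?_) (summable_probFun h0 h1) (summable_probFun h0 h1)
  refine Set.indicator_le_indicator_of_subset ?_ (fun w => wt_nonneg h0 h1 w) w
  rintro w ⟨he, hs⟩
  exact ⟨he, h w he hs⟩

lemma prob_add_compl {N p x} (S : List Bool → Prop) (h0 : 0 ≤ p) (h1 : p ≤ 1) :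
    prob N p x S + prob N p x (fun w => ¬ S w) = prob N p x (fun _ => True) := by
  simp only [prob_eq_tsum_probFun]
  rw [← Summable.tsum_add (summable_probFun h0 h1) (summable_probFun h0 h1)]
  refine tsum_congr fun w => ?_
  simp only [probFun]
  have hdis : Disjoint {w : List Bool | IsExitPath N x w ∧ S w}
      {w : List Bool | IsExitPath N x w ∧ ¬ S w} := by
    rw [Set.disjoint_left]
    rintro u ⟨_, hs⟩ ⟨_, hns⟩
    exact hns hs
  have hu := congrFun (Set.indicator_union_of_disjoint hdis (wt p)) w
  rw [← hu]
  congr 1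
  ext u
  simp only [Set.mem_union, Set.mem_setOf_eq, and_true]
  tauto
end ExitAPI

section Alive
attribute [local instance] Classical.propDecidable

def Alive (N : ℕ) (x : ℤ) (w : List Bool) : Prop :=
  ∀ k ≤ w.length, 0 < walkPos x (w.take k) ∧ walkPos x (w.take k) < (N : ℤ)

noncomputable def aliveF (N : ℕ) (x : ℤ) (n : ℕ) : Finset (List Bool) :=
  (allWords n).filter (Alive N x)

noncomputable def exitF (N : ℕ) (x : ℤ) (n : ℕ) : Finset (List Bool) :=
  (allWords n).filter (IsExitPath N x)

variable {N : ℕ} {x : ℤ} {p : ℝ}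

lemma alive_of_prefix {u w : List Bool} (hw : Alive N x w) (h : u <+: w) : Alive N x u := by
  intro k hk
  rw [← take_of_prefix h hk]
  exact hw k (le_trans hk h.length_le)

lemma alive_concat (hw : Alive N x w) (b : Bool) :
    IsExitPath N x (w ++ [b]) ∨ Alive N x (w ++ [b]) := by
  have hpos := hw w.length (le_refl _)
  rw [List.take_length] at hpos
  have hend := walkPos_concat x w b
  have hint : ∀ k ≤ w.length, 0 < walkPos x ((w ++ [b]).take k) ∧
      walkPos x ((w ++ [b]).take k) < (N : ℤ) := by
    intro k hk
    rw [List.take_append_of_le_length hk]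
    exact hw k hk
  by_cases hb : walkPos x (w ++ [b]) = 0 ∨ walkPos x (w ++ [b]) = (N : ℤ)
  · left
    refine ⟨fun k hk => hint k (by simp at hk; omega), hb⟩
  · right
    intro k hk
    simp only [List.length_append, List.length_singleton] at hk
    rcases Nat.lt_or_ge k (w.length + 1) with hk' | hk'
    · exact hint k (by omega)
    · have hkk : k = w.length + 1 := by omega
      rw [hkk, show w.length + 1 = (w ++ [b]).length by simp, List.take_length]
      push_neg at hb
      cases b <;> simp at hend <;> omega
end Alive

section AliveSum
attribute [local instance] Classical.propDecidable
variable {N : ℕ} {x : ℤ} {p : ℝ}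

lemma exit_of_length_succ {w : List Bool} {n : ℕ} (hw : w.length = n + 1)
    (h : IsExitPath N x w ∨ Alive N x w) :
    ∃ u b, w = u ++ [b] ∧ u ∈ aliveF N x n := by
  obtain ⟨u, b, rfl⟩ : ∃ u b, w = u ++ [b] := by
    rcases List.eq_nil_or_concat w with rfl | ⟨u, b, h⟩
    · simp at hw
    · exact ⟨u, b, by rw [h, List.concat_eq_append]⟩
  refine ⟨u, b, rfl, ?_⟩
  have hu : u.length = n := by simpa using hw
  rw [aliveF, Finset.mem_filter, mem_allWords]
  refine ⟨hu, fun k hk => ?_⟩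
  have htk : (u ++ [b]).take k = u.take k := List.take_append_of_le_length hk
  rcases h with he | ha
  · have := he.1 k (by simp; omega)
    rwa [htk] at this
  · have := ha k (by simp; omega)
    rwa [htk] at this

lemma children_partition (n : ℕ) :
    (aliveF N x n).biUnion (fun w => {w ++ [false], w ++ [true]})
      = exitF N x (n+1) ∪ aliveF N x (n+1) := by
  ext v
  simp only [Finset.mem_biUnion, Finset.mem_insert, Finset.mem_singleton,
    Finset.mem_union, exitF, aliveF, Finset.mem_filter, mem_allWords]
  constructor
  · rintro ⟨w, ⟨hlen, halive⟩, rfl | rfl⟩ <;>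
    · rcases alive_concat halive _ with he | ha
      · exact Or.inl ⟨by simp [hlen], he⟩
      · exact Or.inr ⟨by simp [hlen], ha⟩
  · rintro (⟨hlen, he⟩ | ⟨hlen, ha⟩)
    · rcases exit_of_length_succ hlen (Or.inl he) with ⟨u, b, huab, hu⟩
      rcases Finset.mem_filter.mp hu with ⟨hul, hua⟩
      exact ⟨u, ⟨mem_allWords.mp hul, hua⟩, by rw [huab]; cases b <;> simp⟩
    · rcases exit_of_length_succ hlen (Or.inr ha) with ⟨u, b, huab, hu⟩
      rcases Finset.mem_filter.mp hu with ⟨hul, hua⟩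
      exact ⟨u, ⟨mem_allWords.mp hul, hua⟩, by rw [huab]; cases b <;> simp⟩

lemma exitF_disjoint_aliveF (n : ℕ) : Disjoint (exitF N x n) (aliveF N x n) := by
  rw [Finset.disjoint_left]
  intro w hw hw'
  rcases Finset.mem_filter.mp hw with ⟨_, he⟩
  rcases Finset.mem_filter.mp hw' with ⟨_, ha⟩
  have := ha w.length (le_refl _)
  rw [List.take_length] at this
  rcases he.2 with h | h <;> omega

lemma alive_sum_step (h0 : 0 ≤ p) (h1 : p ≤ 1) (n : ℕ) :
    ∑ w ∈ aliveF N x n, wt p w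
      = ∑ w ∈ exitF N x (n+1), wt p w + ∑ w ∈ aliveF N x (n+1), wt p w := by
  have lhs : ∑ w ∈ aliveF N x n, wt p w
      = ∑ w ∈ aliveF N x n, (wt p (w ++ [false]) + wt p (w ++ [true])) :=
    Finset.sum_congr rfl fun w _ => isFlow_wt w
  rw [lhs, ← Finset.sum_union (exitF_disjoint_aliveF (n+1)), ← children_partition n,
    Finset.sum_biUnion]
  · exact Finset.sum_congr rfl fun w _ => (Finset.sum_pair (by simp)).symm
  · intro a ha b hb hab
    simp only [Finset.disjoint_left, Finset.mem_insert, Finset.mem_singleton]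
    have hl : a.length = b.length := by
      rw [mem_allWords.mp (Finset.mem_filter.mp (by exact_mod_cast ha)).1,
        mem_allWords.mp (Finset.mem_filter.mp (by exact_mod_cast hb)).1]
    rintro w (rfl | rfl) (h | h) <;>
      first
      | exact hab (List.append_inj_left h hl)
      | simpa using List.append_inj_right h hl
end AliveSum

section AliveDecay
attribute [local instance] Classical.propDecidable
variable {N : ℕ} {x : ℤ} {p : ℝ}

lemma sum_wt_allWords (h0 : 0 ≤ p) (h1 : p ≤ 1) (n : ℕ) :
    ∑ v ∈ allWords n, wt p v = 1 := by
  have := flow_sum (isFlow_wt (p := p)) n []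
  simpa [wt_nil] using this

lemma alive_take_mem {m n : ℕ} {w : List Bool} (hw : w ∈ aliveF N x (m + n)) :
    w.take m ∈ aliveF N x m := by
  rcases Finset.mem_filter.mp hw with ⟨hl, ha⟩
  rw [mem_allWords] at hl
  rw [aliveF, Finset.mem_filter, mem_allWords]
  have hlt : (w.take m).length = m := by simp [hl]
  refine ⟨hlt, fun k hk => ?_⟩
  rw [hlt] at hk
  have : (w.take m).take k = w.take k := by rw [List.take_take]; congr 1; omega
  rw [this]
  exact ha k (by omega)

lemma alive_drop_ne_replicate {m : ℕ} (hN : 1 ≤ N) {w : List Bool}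
    (hw : w ∈ aliveF N x (m + N)) : w.drop m ≠ List.replicate N true := by
  intro hrep
  rcases Finset.mem_filter.mp hw with ⟨hl, ha⟩
  rw [mem_allWords] at hl
  set s := walkPos x (w.take m) with hs
  have hsb : 0 < s ∧ s < (N : ℤ) := ha m (by omega)
  set j := ((N : ℤ) - s).toNat with hj
  have hjN : (j : ℤ) = (N : ℤ) - s := Int.toNat_of_nonneg (by omega)
  have hjle : j ≤ N := by omega
  have htake : w.take (m + j) = w.take m ++ List.replicate j true := by
    rw [List.take_add, hrep, List.take_replicate]
    congr 2
    omega
  have hpos : walkPos x (w.take (m + j)) = s + j := by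
    rw [htake, walkPos_append, walkPos_replicate_true]
  have := ha (m + j) (by omega)
  rw [hpos] at this
  omega

lemma alive_decay (h0 : 0 ≤ p) (h1 : p ≤ 1) (hN : 1 ≤ N) (m : ℕ) :
    ∑ w ∈ aliveF N x (m + N), wt p w
      ≤ (1 - p ^ N) * ∑ w ∈ aliveF N x m, wt p w := by
  have hsub : aliveF N x (m + N) ⊆
      (aliveF N x m).biUnion
        (fun u => ((allWords N).erase (List.replicate N true)).image (u ++ ·)) := by
    intro w hw
    refine Finset.mem_biUnion.mpr ⟨w.take m, alive_take_mem hw, ?_⟩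
    refine Finset.mem_image.mpr ⟨w.drop m, ?_, by simp⟩
    refine Finset.mem_erase.mpr ⟨alive_drop_ne_replicate hN hw, ?_⟩
    rw [mem_allWords, List.length_drop,
      mem_allWords.mp (Finset.mem_filter.mp hw).1]
    omega
  calc ∑ w ∈ aliveF N x (m + N), wt p w
      ≤ ∑ w ∈ (aliveF N x m).biUnion
          (fun u => ((allWords N).erase (List.replicate N true)).image (u ++ ·)), wt p w :=
        Finset.sum_le_sum_of_subset_of_nonneg hsub (fun w _ _ => wt_nonneg h0 h1 w)
    _ = ∑ u ∈ aliveF N x m, ∑ w ∈ ((allWords N).erase (List.replicate N true)).image (u ++ ·), wt p w := by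
        refine Finset.sum_biUnion ?_
        intro a ha b hb hab
        rw [Function.onFun, Finset.disjoint_left]
        intro w hw₁ hw₂
        rcases Finset.mem_image.mp hw₁ with ⟨v₁, hv₁, rfl⟩
        rcases Finset.mem_image.mp hw₂ with ⟨v₂, hv₂, he⟩
        have hla : a.length = b.length := by
          rw [mem_allWords.mp (Finset.mem_filter.mp (by exact_mod_cast ha)).1,
            mem_allWords.mp (Finset.mem_filter.mp (by exact_mod_cast hb)).1]
        exact hab (List.append_inj_left he.symm hla)
    _ = ∑ u ∈ aliveF N x m, wt p u * (1 - p ^ N) := by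
        refine Finset.sum_congr rfl fun u _ => ?_
        rw [Finset.sum_image (fun a _ b _ h => List.append_cancel_left h)]
        have : ∑ v ∈ (allWords N).erase (List.replicate N true), wt p (u ++ v)
            = ∑ v ∈ (allWords N).erase (List.replicate N true), wt p u * wt p v :=
          Finset.sum_congr rfl fun v _ => wt_append p u v
        rw [this, ← Finset.mul_sum]
        congr 1
        rw [Finset.sum_erase_eq_sub (mem_allWords.mpr (by simp)), sum_wt_allWords h0 h1,
          wt_replicate_true]
    _ = (1 - p ^ N) * ∑ w ∈ aliveF N x m, wt p w := by
        rw [Finset.mul_sum]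
        exact Finset.sum_congr rfl fun u _ => mul_comm _ _
end AliveDecay

section ProbTrue
attribute [local instance] Classical.propDecidable
variable {N : ℕ} {x : ℤ} {p : ℝ}

lemma cum_exit_alive (h0 : 0 ≤ p) (h1 : p ≤ 1) (hx0 : 0 < x) (hxN : x < (N : ℤ)) (n : ℕ) :
    (∑ k ∈ Finset.range (n+1), ∑ w ∈ exitF N x k, wt p w)
      + ∑ w ∈ aliveF N x n, wt p w = 1 := by
  induction n with
  | zero =>
    have he : exitF N x 0 = ∅ := by
      rw [exitF, show allWords 0 = {[]} from rfl]
      rw [Finset.filter_eq_empty_iff]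
      intro w hw
      rw [Finset.mem_singleton] at hw
      subst hw
      rintro ⟨_, h | h⟩ <;> rw [walkPos_nil] at h <;> omega
    have ha : aliveF N x 0 = {[]} := by
      rw [aliveF, show allWords 0 = {[]} from rfl]
      rw [Finset.filter_eq_self]
      intro w hw
      rw [Finset.mem_singleton] at hw
      subst hw
      intro k hk
      simp only [List.length_nil, Nat.le_zero] at hk
      subst hk
      simp only [List.take_nil, walkPos_nil]
      omega
    simp [he, ha, wt_nil]
  | succ n ih =>
    rw [Finset.sum_range_succ]
    have := alive_sum_step (N := N) (x := x) h0 h1 n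
    linarith [ih, this]

lemma alive_pow_bound (h0 : 0 < p) (h1 : p ≤ 1) (hN : 1 ≤ N) (hx0 : 0 < x) (hxN : x < (N : ℤ))
    (k : ℕ) : ∑ w ∈ aliveF N x (k * N), wt p w ≤ (1 - p ^ N) ^ k := by
  induction k with
  | zero =>
    simp only [Nat.zero_mul, pow_zero]
    have := cum_exit_alive (N := N) (x := x) (le_of_lt h0) h1 hx0 hxN 0
    have hnn : 0 ≤ ∑ k ∈ Finset.range 1, ∑ w ∈ exitF N x k, wt p w :=
      Finset.sum_nonneg fun k _ => Finset.sum_nonneg fun w _ => wt_nonneg (le_of_lt h0) h1 w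
    linarith
  | succ k ih =>
    have : (k+1) * N = k * N + N := by ring
    rw [this]
    calc ∑ w ∈ aliveF N x (k * N + N), wt p w
        ≤ (1 - p ^ N) * ∑ w ∈ aliveF N x (k * N), wt p w :=
          alive_decay (le_of_lt h0) h1 hN _
      _ ≤ (1 - p ^ N) * (1 - p ^ N) ^ k := by
          refine mul_le_mul_of_nonneg_left ih ?_
          have : p ^ N ≤ 1 := pow_le_one₀ (le_of_lt h0) h1
          linarith
      _ = (1 - p ^ N) ^ (k + 1) := by ring

lemma prob_true_eq_one (h0 : 0 < p) (h1 : p ≤ 1) (hx0 : 0 < x) (hxN : x < (N : ℤ)) :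
    prob N p x (fun _ => True) = 1 := by
  have hN : 1 ≤ N := by
    by_contra h
    push_neg at h
    interval_cases N <;> omega
  refine le_antisymm (prob_le_one (le_of_lt h0) h1) ?_
  have key : ∀ n : ℕ, 1 - ∑ w ∈ aliveF N x n, wt p w ≤ prob N p x (fun _ => True) := by
    intro n
    have hdisj : ∀ (k₁ : ℕ), k₁ ∈ Finset.range (n+1) → ∀ (k₂ : ℕ), k₂ ∈ Finset.range (n+1) →
        k₁ ≠ k₂ → Disjoint (exitF N x k₁) (exitF N x k₂) := by
      intro k₁ _ k₂ _ hne
      rw [Finset.disjoint_left]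
      intro w hw₁ hw₂
      exact hne (by rw [← mem_allWords.mp (Finset.mem_filter.mp hw₁).1,
        ← mem_allWords.mp (Finset.mem_filter.mp hw₂).1])
    have hsum : ∑ w ∈ (Finset.range (n+1)).biUnion (exitF N x), probFun N p x (fun _ => True) w
        = ∑ k ∈ Finset.range (n+1), ∑ w ∈ exitF N x k, wt p w := by
      rw [Finset.sum_biUnion (fun a ha b hb hab => hdisj a ha b hb hab)]
      refine Finset.sum_congr rfl fun k _ => Finset.sum_congr rfl fun w hw => ?_
      rcases Finset.mem_filter.mp hw with ⟨_, he⟩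
      exact Set.indicator_of_mem (by exact ⟨he, trivial⟩) (wt p)
    have hle : ∑ w ∈ (Finset.range (n+1)).biUnion (exitF N x), probFun N p x (fun _ => True) w
        ≤ prob N p x (fun _ => True) :=
      Summable.sum_le_tsum _ (fun w _ => probFun_nonneg (le_of_lt h0) h1 w)
        (summable_probFun (le_of_lt h0) h1)
    have := cum_exit_alive (N := N) (x := x) (le_of_lt h0) h1 hx0 hxN n
    linarith [hsum ▸ hle]
  have hlim : Tendsto (fun k : ℕ => (1 - p ^ N) ^ k) atTop (nhds 0) := by
    refine tendsto_pow_atTop_nhds_zero_of_lt_one ?_ ?_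
    · have : p ^ N ≤ 1 := pow_le_one₀ (le_of_lt h0) h1
      linarith
    · have : 0 < p ^ N := pow_pos h0 N
      linarith
  by_contra hlt
  push_neg at hlt
  obtain ⟨k, hk⟩ := (hlim.eventually (eventually_lt_nhds (by linarith : (0:ℝ) < 1 - prob N p x (fun _ => True)))).exists
  have h1k := key (k * N)
  have h2k := alive_pow_bound h0 h1 hN hx0 hxN k
  linarith
end ProbTrue

section IVT
attribute [local instance] Classical.propDecidable
variable {N : ℕ} {x : ℤ} {p : ℝ}

lemma walkPos_take_succ {w : List Bool} {k : ℕ} (hk : k < w.length) (x : ℤ) :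
    walkPos x (w.take (k+1)) = walkPos x (w.take k) + 1 ∨
    walkPos x (w.take (k+1)) = walkPos x (w.take k) - 1 := by
  have h : w.take (k+1) = w.take k ++ [w[k]] := by
    rw [List.take_succ, List.getElem?_eq_getElem hk]
    rfl
  rw [h, walkPos_concat]
  cases w[k]
  · right; simp; omega
  · left; simp

lemma walk_ivt {w : List Bool} {k : ℕ} (hk : k ≤ w.length) {x y : ℤ}
    (h : (x ≤ y ∧ y ≤ walkPos x (w.take k)) ∨ (walkPos x (w.take k) ≤ y ∧ y ≤ x)) :
    ∃ j, j ≤ k ∧ walkPos x (w.take j) = y := by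
  induction k with
  | zero =>
    refine ⟨0, le_refl _, ?_⟩
    simp only [List.take_zero, walkPos_nil] at h ⊢
    omega
  | succ k ih =>
    by_cases hy : (x ≤ y ∧ y ≤ walkPos x (w.take k)) ∨ (walkPos x (w.take k) ≤ y ∧ y ≤ x)
    · obtain ⟨j, hj, hjy⟩ := ih (by omega) hy
      exact ⟨j, by omega, hjy⟩
    · refine ⟨k+1, le_refl _, ?_⟩
      push_neg at hy
      rcases walkPos_take_succ (by omega : k < w.length) x with hs | hs <;> omega

lemma mem_rangeSet {x y : ℤ} {w : List Bool} {j : ℕ} (hj : j ≤ w.length)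
    (hy : walkPos x (w.take j) = y) : y ∈ rangeSet x w := by
  exact Finset.mem_image.mpr ⟨j, Finset.mem_range.mpr (by omega), hy⟩

lemma rangeCount_ge_of_exit_N {w : List Bool} (hw : IsExitPath N x w)
    (hend : walkPos x w = (N : ℤ)) (hx : x ≤ (N : ℤ)) :
    (N : ℤ) - x + 1 ≤ (rangeCount x w : ℤ) := by
  have hsub : Finset.Icc x (N : ℤ) ⊆ rangeSet x w := by
    intro y hy
    rw [Finset.mem_Icc] at hy
    have : walkPos x (w.take w.length) = (N : ℤ) := by rwa [List.take_length]
    obtain ⟨j, hj, hjy⟩ := walk_ivt (y := y) (le_refl w.length) (Or.inl ⟨hy.1, by omega⟩)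
    exact mem_rangeSet hj hjy
  have hcard := Finset.card_le_card hsub
  rw [Int.card_Icc] at hcard
  rw [rangeCount]
  have h1 : (N : ℤ) + 1 - x = (N : ℤ) - x + 1 := by ring
  have h2 : (0 : ℤ) ≤ (N : ℤ) - x + 1 := by omega
  calc (N : ℤ) - x + 1 = (((N : ℤ) + 1 - x).toNat : ℤ) := by rw [Int.toNat_of_nonneg (by omega)]; omega
    _ ≤ ((rangeSet x w).card : ℤ) := by exact_mod_cast hcard

lemma rangeCount_le_of_no_hit {w : List Bool} (hw : IsExitPath N x w) {a : ℤ}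
    (ha0 : 0 < a) (hax : a < x) (hxN : x ≤ (N : ℤ)) (hnohit : ¬ hitsBefore x a w) :
    (rangeCount x w : ℤ) ≤ (N : ℤ) - a := by
  have hsub : rangeSet x w ⊆ Finset.Icc (a + 1) (N : ℤ) := by
    intro y hy
    rcases Finset.mem_image.mp hy with ⟨j, hjr, hjy⟩
    rw [Finset.mem_range] at hjr
    have hj : j ≤ w.length := by omega
    rw [Finset.mem_Icc]
    constructor
    · -- y > a
      by_contra hya
      push_neg at hya
      obtain ⟨i, hi, hia⟩ := walk_ivt (x := x) (y := a) hj (Or.inr ⟨by omega, by omega⟩)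
      have hi1 : 1 ≤ i := by
        rcases Nat.eq_zero_or_pos i with rfl | h
        · simp only [List.take_zero, walkPos_nil] at hia; omega
        · exact h
      have hilen : i < w.length := by
        rcases lt_or_eq_of_le (le_trans hi hj) with h | h
        · exact h
        · exfalso
          rw [h, List.take_length] at hia
          rcases hw.2 with h2 | h2 <;> omega
      exact hnohit ⟨i, hi1, hilen, hia⟩
    · -- y ≤ N
      rcases lt_or_eq_of_le hj with h | h
      · have := hw.1 j h
        omega
      · rw [h, List.take_length] at hjy
        rcases hw.2 with h2 | h2 <;> omega
  have hcard := Finset.card_le_card hsub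
  rw [Int.card_Icc] at hcard
  rw [rangeCount]
  calc ((rangeSet x w).card : ℤ) ≤ (((N : ℤ) + 1 - (a + 1)).toNat : ℤ) := by exact_mod_cast hcard
    _ ≤ (N : ℤ) - a := by rw [Int.toNat_of_nonneg (by omega)]; omega
end IVT

section ExitZero
attribute [local instance] Classical.propDecidable
variable {N : ℕ} {x : ℤ} {p r : ℝ}

lemma zpow_nonneg' (hr : 0 < r) (n : ℤ) : (0:ℝ) ≤ r ^ n := le_of_lt (zpow_pos hr n)

lemma prob_exit_zero_le (h0 : 0 ≤ p) (h1 : p ≤ 1) (hr : 0 < r)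
    (hharm : p * r + (1 - p) * r⁻¹ = 1) :
    prob N p x (fun w => walkPos x w = 0) ≤ r ^ x := by
  refine tsum_le_of_sum_le' (zpow_nonneg' hr x) fun F => ?_
  rw [show (fun w => Set.indicator {w | IsExitPath N x w ∧ walkPos x w = 0} (wt p) w)
    = probFun N p x (fun w => walkPos x w = 0) from rfl, probFun,
    Finset.sum_indicator_eq_sum_filter]
  have key : ∀ w ∈ F.filter (fun w => w ∈ {w | IsExitPath N x w ∧ walkPos x w = 0}),
      wt p w = hwt p x r w := by
    intro w hw
    rcases Finset.mem_filter.mp hw with ⟨_, _, hend⟩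
    rw [hwt, hend, zpow_zero, mul_one]
  rw [Finset.sum_congr rfl key]
  calc ∑ w ∈ F.filter (fun w => w ∈ {w | IsExitPath N x w ∧ walkPos x w = 0}), hwt p x r w
      ≤ hwt p x r [] := kraft (isFlow_hwt hr hharm x) (hwt_nonneg h0 h1 hr x)
        (exit_prefixfree fun w hw => (Set.mem_setOf_eq ▸ (Finset.mem_filter.mp hw).2).1)
    _ = r ^ x := by rw [hwt, wt_nil, walkPos_nil, one_mul]
end ExitZero

section Hitting
attribute [local instance] Classical.propDecidable
variable {N : ℕ} {x a : ℤ} {p r : ℝ}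

def FirstHitPath (N : ℕ) (x a : ℤ) (u : List Bool) : Prop :=
  (∀ j < u.length, a < walkPos x (u.take j) ∧ walkPos x (u.take j) < (N:ℤ))
    ∧ walkPos x u = a

lemma firstHitPath_prefix_eq {u w : List Bool} (hu : FirstHitPath N x a u)
    (hw : FirstHitPath N x a w) (h : u <+: w) : u = w := by
  rcases lt_or_eq_of_le h.length_le with hl | hl
  · exfalso
    have h2 := hw.1 u.length hl
    rw [take_of_prefix h (le_refl _), List.take_length] at h2
    have := hu.2
    omega
  · exact h.eq_of_length hl

noncomputable def uOf (x a : ℤ) (w : List Bool) : List Bool :=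
  if h : ∃ k, 1 ≤ k ∧ walkPos x (w.take k) = a then w.take (Nat.find h) else []

lemma uOf_spec {w : List Bool} (hw : IsExitPath N x w) (hh : hitsBefore x a w)
    (hax : a < x) :
    ∃ n, uOf x a w = w.take n ∧ 1 ≤ n ∧ n < w.length ∧ FirstHitPath N x a (w.take n) := by
  obtain ⟨k, hk1, hklen, hka⟩ := hh
  have hex : ∃ k, 1 ≤ k ∧ walkPos x (w.take k) = a := ⟨k, hk1, hka⟩
  refine ⟨Nat.find hex, by rw [uOf, dif_pos hex], (Nat.find_spec hex).1, ?_, ?_, ?_⟩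
  · exact lt_of_le_of_lt (Nat.find_min' hex ⟨hk1, hka⟩) hklen
  · -- interior condition
    have hn : Nat.find hex < w.length := lt_of_le_of_lt (Nat.find_min' hex ⟨hk1, hka⟩) hklen
    have hlen : (w.take (Nat.find hex)).length = Nat.find hex := by
      rw [List.length_take]; omega
    have habove : ∀ j, j < Nat.find hex → a < walkPos x (w.take j) := by
      intro j
      induction j with
      | zero => intro _; simp only [List.take_zero, walkPos_nil]; exact hax
      | succ j ih =>
        intro hj
        have hja := ih (by omega)
        have hne : walkPos x (w.take (j+1)) ≠ a := by
          intro hcon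
          have := Nat.find_min' hex ⟨by omega, hcon⟩
          omega
        rcases walkPos_take_succ (by omega : j < w.length) x with hs | hs <;> omega
    intro j hj
    rw [hlen] at hj
    rw [List.take_take, min_eq_left (by omega)]
    refine ⟨habove j hj, (hw.1 j (by omega)).2⟩
  · exact (Nat.find_spec hex).2

lemma prob_hits_le (h0 : 0 ≤ p) (h1 : p ≤ 1) (hr : 0 < r)
    (hharm : p * r + (1 - p) * r⁻¹ = 1) (ha0 : 0 < a) (hax : a < x) :
    prob N p x (fun w => hitsBefore x a w) ≤ r ^ (x - a) := by
  refine tsum_le_of_sum_le' (zpow_nonneg' hr _) fun F => ?_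
  rw [show (fun w => Set.indicator {w | IsExitPath N x w ∧ hitsBefore x a w} (wt p) w)
    = probFun N p x (fun w => hitsBefore x a w) from rfl, probFun,
    Finset.sum_indicator_eq_sum_filter]
  set G := F.filter (fun w => w ∈ {w | IsExitPath N x w ∧ hitsBefore x a w}) with hGdef
  have hGprop : ∀ w ∈ G, IsExitPath N x w ∧ hitsBefore x a w := by
    intro w hw
    exact (Finset.mem_filter.mp hw).2
  have huprefix : ∀ w ∈ G, (uOf x a w) <+: w ∧ FirstHitPath N x a (uOf x a w) := by
    intro w hw
    obtain ⟨n, hu, _, hnlen, hfh⟩ := uOf_spec (hGprop w hw).1 (hGprop w hw).2 hax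
    exact ⟨hu ▸ List.take_prefix n w, hu ▸ hfh⟩
  have hmaps : ∀ w ∈ G, uOf x a w ∈ G.image (uOf x a) :=
    fun w hw => Finset.mem_image_of_mem _ hw
  rw [← Finset.sum_fiberwise_of_maps_to hmaps (wt p)]
  have inner : ∀ u ∈ G.image (uOf x a),
      ∑ w ∈ G.filter (fun w => uOf x a w = u), wt p w ≤ wt p u := by
    intro u hu
    obtain ⟨w₀, hw₀, rfl⟩ := Finset.mem_image.mp hu
    set u := uOf x a w₀
    have hfib : ∀ w ∈ G.filter (fun w => uOf x a w = u), u <+: w := by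
      intro w hw
      rcases Finset.mem_filter.mp hw with ⟨hwG, hwu⟩
      exact hwu ▸ (huprefix w hwG).1
    have hsplit : ∀ w ∈ G.filter (fun w => uOf x a w = u),
        wt p w = wt p u * wt p (w.drop u.length) := by
      intro w hw
      conv_lhs => rw [show w = u ++ w.drop u.length by
        rcases hfib w hw with ⟨t, rfl⟩
        rw [List.drop_left]]
      rw [wt_append]
    rw [Finset.sum_congr rfl hsplit, ← Finset.mul_sum]
    have himg : ∑ w ∈ G.filter (fun w => uOf x a w = u), wt p (w.drop u.length)
        = ∑ v ∈ (G.filter (fun w => uOf x a w = u)).image (List.drop u.length), wt p v := by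
      rw [Finset.sum_image]
      intro w₁ h₁ w₂ h₂ he
      have e₁ : w₁ = u ++ w₁.drop u.length := by
        rcases hfib w₁ h₁ with ⟨t, rfl⟩; rw [List.drop_left]
      have e₂ : w₂ = u ++ w₂.drop u.length := by
        rcases hfib w₂ h₂ with ⟨t, rfl⟩; rw [List.drop_left]
      rw [e₁, e₂, he]
    have hVpf : ∀ v₁ ∈ (G.filter (fun w => uOf x a w = u)).image (List.drop u.length),
        ∀ v₂ ∈ (G.filter (fun w => uOf x a w = u)).image (List.drop u.length),
        v₁ <+: v₂ → v₁ = v₂ := by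
      intro v₁ h₁ v₂ h₂ hpre
      obtain ⟨w₁, hw₁, rfl⟩ := Finset.mem_image.mp h₁
      obtain ⟨w₂, hw₂, rfl⟩ := Finset.mem_image.mp h₂
      have e₁ : w₁ = u ++ w₁.drop u.length := by
        rcases hfib w₁ hw₁ with ⟨t, rfl⟩; rw [List.drop_left]
      have e₂ : w₂ = u ++ w₂.drop u.length := by
        rcases hfib w₂ hw₂ with ⟨t, rfl⟩; rw [List.drop_left]
      have hpre' : w₁ <+: w₂ := by
        rw [e₁, e₂]
        exact ⟨hpre.choose, by rw [List.append_assoc, hpre.choose_spec]⟩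
      have := exitPath_prefix_eq (hGprop w₁ (Finset.mem_filter.mp hw₁).1).1
        (hGprop w₂ (Finset.mem_filter.mp hw₂).1).1 hpre'
      rw [this]
    have hV : ∑ v ∈ (G.filter (fun w => uOf x a w = u)).image (List.drop u.length), wt p v ≤ 1 := by
      calc _ ≤ wt p [] := kraft isFlow_wt (wt_nonneg h0 h1) hVpf
        _ = 1 := wt_nil p
    calc wt p u * ∑ w ∈ G.filter (fun w => uOf x a w = u), wt p (w.drop u.length)
        = wt p u * ∑ v ∈ (G.filter (fun w => uOf x a w = u)).image (List.drop u.length), wt p v := by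
          rw [himg]
      _ ≤ wt p u * 1 := mul_le_mul_of_nonneg_left hV (wt_nonneg h0 h1 u)
      _ = wt p u := mul_one _
  calc ∑ u ∈ G.image (uOf x a), ∑ w ∈ G.filter (fun w => uOf x a w = u), wt p w
      ≤ ∑ u ∈ G.image (uOf x a), wt p u := Finset.sum_le_sum inner
    _ ≤ r ^ (x - a) := by
      have hpf : ∀ u₁ ∈ G.image (uOf x a), ∀ u₂ ∈ G.image (uOf x a), u₁ <+: u₂ → u₁ = u₂ := by
        intro u₁ h₁ u₂ h₂ hpre
        obtain ⟨w₁, hw₁, rfl⟩ := Finset.mem_image.mp h₁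
        obtain ⟨w₂, hw₂, rfl⟩ := Finset.mem_image.mp h₂
        exact firstHitPath_prefix_eq (huprefix w₁ hw₁).2 (huprefix w₂ hw₂).2 hpre
      have hk := kraft (isFlow_hwt hr hharm x) (hwt_nonneg h0 h1 hr x) hpf
      have hend : ∀ u ∈ G.image (uOf x a), hwt p x r u = wt p u * r ^ a := by
        intro u hu
        obtain ⟨w₁, hw₁, rfl⟩ := Finset.mem_image.mp hu
        rw [hwt, (huprefix w₁ hw₁).2.2]
      rw [Finset.sum_congr rfl hend] at hk
      rw [hwt, wt_nil, walkPos_nil, one_mul] at hk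
      rw [← Finset.sum_mul] at hk
      have hra : (0:ℝ) < r ^ a := zpow_pos hr a
      rw [zpow_sub₀ (ne_of_gt hr)]
      rw [le_div_iff₀ hra]
      exact hk
end Hitting

section PerX
attribute [local instance] Classical.propDecidable
variable {p q β : ℝ}

lemma harm_eq (hq : 0 < q) (hpq : q < p) (hsum : p + q = 1) :
    p * (q / p) + (1 - p) * (q / p)⁻¹ = 1 := by
  have hp0 : 0 < p := lt_trans hq hpq
  have h1p : 1 - p = q := by linarith
  rw [h1p, inv_div]
  field_simp
  linarith

lemma f_low {N m : ℕ} (hq : 0 < q) (hpq : q < p) (hsum : p + q = 1)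
    (hm0 : 0 < m) (hmN : m < N) (hβ : β * N ≤ (N : ℝ) - m + 1) :
    1 - (q / p) ^ m ≤ prob N p (m : ℤ) (fun w => β * N ≤ (rangeCount (m:ℤ) w : ℝ)) := by
  have hp0 : 0 < p := lt_trans hq hpq
  have hp1 : p ≤ 1 := by linarith
  have hr0 : 0 < q / p := div_pos hq hp0
  have hmono : prob N p (m : ℤ) (fun w => ¬ (walkPos (m:ℤ) w = 0))
      ≤ prob N p (m : ℤ) (fun w => β * N ≤ (rangeCount (m:ℤ) w : ℝ)) := by
    refine prob_mono (le_of_lt hp0) hp1 fun w hw hnz => ?_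
    have hend : walkPos (m:ℤ) w = (N : ℤ) := by
      rcases hw.2 with h | h
      · exact absurd h hnz
      · exact h
    have hge := rangeCount_ge_of_exit_N hw hend (by exact_mod_cast le_of_lt hmN)
    have : ((N : ℝ) - m + 1) ≤ (rangeCount (m:ℤ) w : ℝ) := by exact_mod_cast hge
    linarith
  have hcompl := prob_add_compl (N := N) (x := (m:ℤ)) (fun w => walkPos (m:ℤ) w = 0)
    (le_of_lt hp0) hp1
  have htrue : prob N p (m:ℤ) (fun _ => True) = 1 :=
    prob_true_eq_one hp0 hp1 (by exact_mod_cast hm0) (by exact_mod_cast hmN)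
  have hzero : prob N p (m:ℤ) (fun w => walkPos (m:ℤ) w = 0) ≤ (q/p) ^ (m : ℤ) :=
    prob_exit_zero_le (le_of_lt hp0) hp1 hr0 (harm_eq hq hpq hsum)
  have hz : (q/p) ^ (m : ℤ) = (q/p) ^ m := zpow_natCast _ m
  linarith [hz ▸ hzero]

lemma f_high {N m K : ℕ} (hq : 0 < q) (hpq : q < p) (hsum : p + q = 1)
    (hK : 1 ≤ K) (hKm : K < m) (hmN : m ≤ N)
    (hβ : (N : ℝ) - ((m : ℝ) - K) < β * N) :
    prob N p (m:ℤ) (fun w => β * N ≤ (rangeCount (m:ℤ) w : ℝ)) ≤ (q/p) ^ K := by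
  have hp0 : 0 < p := lt_trans hq hpq
  have hp1 : p ≤ 1 := by linarith
  have hr0 : 0 < q / p := div_pos hq hp0
  set a : ℤ := (m : ℤ) - K with ha
  have ha0 : 0 < a := by omega
  have hax : a < (m : ℤ) := by omega
  have hmono : prob N p (m:ℤ) (fun w => β * N ≤ (rangeCount (m:ℤ) w : ℝ))
      ≤ prob N p (m:ℤ) (fun w => hitsBefore (m:ℤ) a w) := by
    refine prob_mono (le_of_lt hp0) hp1 fun w hw hS => ?_
    by_contra hno
    have hle := rangeCount_le_of_no_hit hw ha0 hax (by exact_mod_cast hmN) hno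
    have h3 : (rangeCount (m:ℤ) w : ℝ) ≤ (N : ℝ) - ((m:ℝ) - K) := by
      have h2 : ((rangeCount (m:ℤ) w : ℤ) : ℝ) ≤ (((N:ℤ) - ((m:ℤ) - (K:ℤ)) : ℤ) : ℝ) := by
        exact_mod_cast (ha ▸ hle)
      push_cast at h2
      linarith
    linarith
  have hhit := prob_hits_le (N := N) (le_of_lt hp0) hp1 hr0 (harm_eq hq hpq hsum) ha0 hax
  have : ((m:ℤ) - a) = (K : ℤ) := by omega
  rw [this, zpow_natCast] at hhit
  linarith
end PerX


set_option maxHeartbeats 1000000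

/-- Proposition 2 (asymmetric case): for the walk with fixed `0 < q < p`, `p + q = 1`,
started uniformly at random on `{0, …, N}`, `R_N / N` converges in distribution to
`U[0,1]`. -/
theorem range_uniform_start_asymmetric (p q β : ℝ) (hq : 0 < q) (hpq : q < p)
    (hsum : p + q = 1) (hβ0 : 0 < β) (hβ1 : β < 1) :
    Tendsto (fun N : ℕ => probUniform N p
        fun x w => β * (N : ℝ) ≤ (rangeCount x w : ℝ))
      atTop (𝓝 (1 - β)) := by
  classical
  have hp0 : 0 < p := lt_trans hq hpq
  have hp1 : p ≤ 1 := by linarith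
  have hr0 : 0 < q / p := div_pos hq hp0
  have hr1 : q / p < 1 := (div_lt_one hp0).mpr hpq
  rw [Metric.tendsto_atTop]
  intro ε hε
  set δ : ℝ := min (ε / 4) (1 / 2) with hδdef
  have hδ0 : 0 < δ := lt_min (by linarith) (by norm_num)
  have hδε : δ ≤ ε / 4 := min_le_left _ _
  have hδh : δ ≤ 1 / 2 := min_le_right _ _
  obtain ⟨K₀, hK₀⟩ := exists_pow_lt_of_lt_one hδ0 hr1
  set K : ℕ := K₀ + 1 with hKdef
  have hK1 : 1 ≤ K := by omega
  have hrK : (q / p) ^ K ≤ δ :=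
    le_of_lt (lt_of_le_of_lt (pow_le_pow_of_le_one (le_of_lt hr0) (le_of_lt hr1) (by omega)) hK₀)
  -- the main estimate for large N
  have main : ∀ N : ℕ, ((K : ℝ) + 1 ≤ (1 - β) * N) →
      |probUniform N p (fun x w => β * (N : ℝ) ≤ (rangeCount x w : ℝ)) - (1 - β)|
        ≤ δ + ((K : ℝ) + 1) / ((N : ℝ) + 1) := by
    intro N hN
    have hNR : (K : ℝ) + 1 ≤ (N : ℝ) := by
      have h1 : (0:ℝ) ≤ β * N := by positivity
      nlinarith [hN]
    have hN2 : (2 : ℝ) ≤ (N : ℝ) := by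
      have : (1 : ℝ) ≤ (K : ℝ) := by exact_mod_cast hK1
      linarith
    have hn1 : (0 : ℝ) < (N : ℝ) + 1 := by linarith
    set f : ℕ → ℝ := fun m => prob N p (m : ℤ) (fun w => β * (N : ℝ) ≤ (rangeCount (m : ℤ) w : ℝ)) with hf
    have hf0 : ∀ m, 0 ≤ f m := fun m => prob_nonneg (le_of_lt hp0) hp1
    have hf1 : ∀ m, f m ≤ 1 := fun m => prob_le_one (le_of_lt hp0) hp1
    set T : ℝ := ∑ m ∈ Finset.range (N + 1), f m with hT
    -- upper bound on T
    have hT_up : T ≤ (1 - β) * N + (K : ℝ) + 1 + ((N : ℝ) + 1) * δ := by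
      set P : ℕ → Prop := fun m => (m : ℝ) ≤ (1 - β) * N + K with hP
      rw [hT, ← Finset.sum_filter_add_sum_filter_not (Finset.range (N + 1)) P f]
      have h1 : ∑ m ∈ (Finset.range (N + 1)).filter P, f m
          ≤ ((Finset.range (N + 1)).filter P).card * 1 := by
        have := Finset.sum_le_card_nsmul ((Finset.range (N + 1)).filter P) f 1
          (fun m _ => hf1 m)
        simpa [nsmul_eq_mul] using this
      have hcA : (((Finset.range (N + 1)).filter P).card : ℝ) ≤ (1 - β) * N + K + 1 := by
        have hb0 : (0 : ℝ) ≤ (1 - β) * N := mul_nonneg (by linarith) (Nat.cast_nonneg _)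
        have hc0 : (0 : ℝ) ≤ (1 - β) * N + K := by
          have := Nat.cast_nonneg (α := ℝ) K
          linarith
        have hsubA : (Finset.range (N + 1)).filter P ⊆
            Finset.range (Nat.floor ((1 - β) * N + K) + 1) := by
          intro m hm
          rcases Finset.mem_filter.mp hm with ⟨_, hmP⟩
          rw [Finset.mem_range, Nat.lt_succ_iff]
          exact Nat.le_floor hmP
        have := Finset.card_le_card hsubA
        rw [Finset.card_range] at this
        calc (((Finset.range (N + 1)).filter P).card : ℝ)
            ≤ ((Nat.floor ((1 - β) * N + K) + 1 : ℕ) : ℝ) := by exact_mod_cast this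
          _ ≤ (1 - β) * N + K + 1 := by
              have hfl := Nat.floor_le hc0
              push_cast at hfl ⊢
              linarith
      have h2 : ∑ m ∈ (Finset.range (N + 1)).filter (fun m => ¬ P m), f m
          ≤ ((N : ℝ) + 1) * δ := by
        have hbound : ∀ m ∈ (Finset.range (N + 1)).filter (fun m => ¬ P m), f m ≤ δ := by
          intro m hm
          rcases Finset.mem_filter.mp hm with ⟨hmr, hmP⟩
          rw [Finset.mem_range, Nat.lt_succ_iff] at hmr
          simp only [hP] at hmP
          push_neg at hmP
          have hKm : K < m := by
            have hb : (0:ℝ) ≤ (1 - β) * N := mul_nonneg (by linarith) (Nat.cast_nonneg _)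
            have : (K : ℝ) < (m : ℝ) := by linarith
            exact_mod_cast this
          have hhigh := f_high (β := β) hq hpq hsum hK1 hKm hmr (by linarith)
          exact le_trans hhigh hrK
        have := Finset.sum_le_card_nsmul _ f δ hbound
        rw [nsmul_eq_mul] at this
        refine le_trans this ?_
        have hcard : (((Finset.range (N + 1)).filter (fun m => ¬ P m)).card : ℝ) ≤ (N : ℝ) + 1 := by
          have := Finset.card_le_card (Finset.filter_subset (fun m => ¬ P m) (Finset.range (N + 1)))
          rw [Finset.card_range] at this
          exact_mod_cast this
        have := mul_le_mul_of_nonneg_right hcard (le_of_lt hδ0)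
        linarith
      have h1' : ∑ m ∈ (Finset.range (N + 1)).filter P, f m ≤ (1 - β) * N + K + 1 := by
        rw [mul_one] at h1
        exact le_trans h1 hcA
      linarith
    -- lower bound on T
    have hT_lo : (1 - β) * N - (K : ℝ) - δ * N ≤ T := by
      set M : ℕ := Nat.floor ((1 - β) * N) with hM
      have hc0 : (0 : ℝ) ≤ (1 - β) * N := mul_nonneg (by linarith) (Nat.cast_nonneg _)
      have hMle : (M : ℝ) ≤ (1 - β) * N := Nat.floor_le hc0
      have hMgt : (1 - β) * N < (M : ℝ) + 1 := Nat.lt_floor_add_one _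
      have hKM : K ≤ M := by
        have h1 : (K : ℝ) < (M : ℝ) + 1 := by linarith
        have h2 : K < M + 1 := by exact_mod_cast h1
        omega
      have hMN : M ≤ N := by
        have hb : (0:ℝ) ≤ β * N := by positivity
        have : (M : ℝ) ≤ (N : ℝ) := by linarith
        exact_mod_cast this
      have hsubB : Finset.Icc K M ⊆ Finset.range (N + 1) := by
        intro m hm
        rw [Finset.mem_Icc] at hm
        rw [Finset.mem_range]
        omega
      have hlow : ∀ m ∈ Finset.Icc K M, 1 - δ ≤ f m := by
        intro m hm
        rw [Finset.mem_Icc] at hm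
        have hm0 : 0 < m := by omega
        have hmR : (m : ℝ) ≤ (1 - β) * N := le_trans (by exact_mod_cast hm.2) hMle
        have hmN : m < N := by
          have hNpos : (0:ℝ) < (N : ℝ) := by linarith
          have hb : (0:ℝ) < β * N := mul_pos hβ0 hNpos
          have : (m : ℝ) < (N : ℝ) := by linarith
          exact_mod_cast this
        have hflow := f_low (β := β) hq hpq hsum hm0 hmN (by linarith)
        have hpow : (q / p) ^ m ≤ (q / p) ^ K :=
          pow_le_pow_of_le_one (le_of_lt hr0) (le_of_lt hr1) hm.1
        have : 1 - δ ≤ 1 - (q / p) ^ m := by linarith [le_trans hpow hrK]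
        exact le_trans this hflow
      have hsum1 : ∑ m ∈ Finset.Icc K M, f m ≤ T := by
        rw [hT]
        exact Finset.sum_le_sum_of_subset_of_nonneg hsubB (fun m _ _ => hf0 m)
      have hsum2 : ((Finset.Icc K M).card : ℝ) * (1 - δ) ≤ ∑ m ∈ Finset.Icc K M, f m := by
        have := Finset.card_nsmul_le_sum (Finset.Icc K M) f (1 - δ) hlow
        simpa [nsmul_eq_mul] using this
      have hcardB : (1 - β) * N - (K : ℝ) ≤ ((Finset.Icc K M).card : ℝ) := by
        rw [Nat.card_Icc]
        have : ((M + 1 - K : ℕ) : ℝ) = (M : ℝ) + 1 - K := by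
          have : K ≤ M + 1 := by omega
          push_cast [Nat.cast_sub this]
          ring
        rw [this]
        linarith
      have hδ1 : (0:ℝ) ≤ 1 - δ := by linarith
      have hstep1 : ((1 - β) * N - (K : ℝ)) * (1 - δ) ≤ ((Finset.Icc K M).card : ℝ) * (1 - δ) :=
        mul_le_mul_of_nonneg_right hcardB hδ1
      have he1 : (0:ℝ) ≤ δ * (β * N) := by positivity
      have he2 : (0:ℝ) ≤ δ * K := by positivity
      nlinarith [hstep1, hsum1, hsum2, he1, he2]
    -- combine
    have hc : ((K : ℝ) + 1) / ((N : ℝ) + 1) * ((N : ℝ) + 1) = (K : ℝ) + 1 :=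
      div_mul_cancel₀ _ (ne_of_gt hn1)
    have hPU : probUniform N p (fun x w => β * (N : ℝ) ≤ (rangeCount x w : ℝ))
        = T / ((N : ℝ) + 1) := by
      rw [hT, hf, probUniform]
    rw [hPU, abs_sub_le_iff]
    constructor
    · rw [sub_le_iff_le_add, div_le_iff₀ hn1]
      have hb1 : (0:ℝ) ≤ 1 - β := by linarith
      linarith only [hc, hT_up, hb1, hδ0]
    · rw [sub_le_iff_le_add]
      have hTlo' : ((1 - β) - δ - ((K : ℝ) + 1) / ((N : ℝ) + 1)) * ((N : ℝ) + 1) ≤ T := by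
        have hx : ((1 - β) - δ - ((K : ℝ) + 1) / ((N : ℝ) + 1)) * ((N : ℝ) + 1)
            = (1 - β) * ((N : ℝ) + 1) - δ * ((N : ℝ) + 1) - ((K : ℝ) + 1) := by
          rw [sub_mul, sub_mul, hc]
        rw [hx]
        linarith [hT_lo]
      have h9 := (le_div_iff₀ hn1).mpr hTlo'
      linarith only [h9]
  -- eventual conditions
  have hev1 : ∀ᶠ N : ℕ in atTop, (K : ℝ) + 1 ≤ (1 - β) * N := by
    have ht : Tendsto (fun N : ℕ => (1 - β) * (N : ℝ)) atTop atTop :=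
      Tendsto.const_mul_atTop (by linarith) tendsto_natCast_atTop_atTop
    exact ht.eventually_ge_atTop _
  have hev2 : ∀ᶠ N : ℕ in atTop, ((K : ℝ) + 1) / ((N : ℝ) + 1) ≤ ε / 4 := by
    have ht : Tendsto (fun N : ℕ => ((K : ℝ) + 1) / ((N : ℝ) + 1)) atTop (𝓝 0) := by
      apply Tendsto.div_atTop tendsto_const_nhds
      exact tendsto_atTop_add_const_right atTop 1 tendsto_natCast_atTop_atTop
    exact ht.eventually (eventually_le_nhds (by linarith))
  obtain ⟨n₀, hn₀⟩ := Filter.eventually_atTop.mp (hev1.and hev2)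
  refine ⟨n₀, fun N hN => ?_⟩
  obtain ⟨h1, h2⟩ := hn₀ N hN
  have := main N h1
  rw [Real.dist_eq]
  calc |probUniform N p (fun x w => β * (N : ℝ) ≤ (rangeCount x w : ℝ)) - (1 - β)|
      ≤ δ + ((K : ℝ) + 1) / ((N : ℝ) + 1) := this
    _ ≤ ε / 4 + ε / 4 := by linarith
    _ < ε := by linarith
end

section
/- For the symmetric random walk whose starting point X_0 is chosen uniformly at random from T_N = {0,1,…,N}, for any fixed β ∈ (0,1), the probability that the site ⌊βN⌋ is visited before the exit time τ_N converges to 1/2 as N → ∞. -/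
open Filter Topology

open scoped ENNReal

/-!
The probability `h x` that the walk started at `x` visits `y` before exiting satisfies
`2 h x = h (x - 1) + h (x + 1)` away from `0, y, N`, with `h 0 = h N = 0` and `h y = 1`, so it
is the tent function `x / y` on `[0, y]`, `(N - x) / (N - y)` on `[y, N]`, whose average over
`{0, …, N}` is `N / (2 (N + 1)) → 1/2`. That `h y = 1` is the fact that the walk exits almost
surely: by Kraft's inequality for the prefix-free set of exit paths, the exit probability is
finite, and being harmonic with boundary values `1`, it is identically `1`.
-/

def walkStep (b : Bool) : ℤ := if b then 1 else -1

lemma walkPos_cons (x : ℤ) (b : Bool) (w : List Bool) :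
    walkPos x (b :: w) = walkPos (x + walkStep b) w := by
  cases b <;> simp [walkPos, walkStep] <;> ring

lemma walkPos_take_succ_cons (x : ℤ) (b : Bool) (w : List Bool) (k : ℕ) :
    walkPos x ((b :: w).take (k + 1)) = walkPos (x + walkStep b) (w.take k) := by
  rw [List.take_succ_cons, walkPos_cons]

lemma isExitPath_nil_iff {N : ℕ} {x : ℤ} : IsExitPath N x [] ↔ x = 0 ∨ x = N := by
  simp [IsExitPath, walkPos]

lemma IsExitPath.eq_nil_of_boundary {N : ℕ} {x : ℤ} {w : List Bool} (h : IsExitPath N x w)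
    (hx : x = 0 ∨ x = N) : w = [] := by
  rcases w with _ | ⟨b, w⟩
  · rfl
  · have := h.1 0 (by simp)
    simp only [List.take_zero, walkPos, List.count_nil, CharP.cast_eq_zero, add_zero,
      sub_zero] at this
    omega

lemma isExitPath_cons_iff {N : ℕ} {x : ℤ} (hx0 : 0 < x) (hxN : x < N) (b : Bool)
    (w : List Bool) : IsExitPath N x (b :: w) ↔ IsExitPath N (x + walkStep b) w := by
  simp only [IsExitPath, List.length_cons, walkPos_cons]
  refine and_congr_left fun _ => ⟨fun h k hk => ?_, fun h k hk => ?_⟩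
  · simpa only [walkPos_take_succ_cons] using h (k + 1) (by omega)
  · rcases k with _ | k
    · simpa [walkPos] using ⟨hx0, hxN⟩
    · simpa only [walkPos_take_succ_cons] using h k (by omega)

lemma IsExitPath.eq_of_prefix {N : ℕ} {x : ℤ} {w v : List Bool} (hw : IsExitPath N x w)
    (hv : IsExitPath N x v) (hwv : w <+: v) : w = v := by
  obtain ⟨u, rfl⟩ := hwv
  rcases u with _ | ⟨b, u⟩
  · simp
  · have := hv.1 w.length (by simp)
    rw [List.take_left] at this
    rcases hw.2 with h | h <;> omega

/-- Kraft's inequality for binary prefix-free codes. -/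
theorem sum_inv_two_pow_length_le_one {F : Finset (List Bool)}
    (hF : ∀ w ∈ F, ∀ v ∈ F, w <+: v → w = v) :
    ∑ w ∈ F, (2⁻¹ : ℝ≥0∞) ^ w.length ≤ 1 := by
  suffices bounded_length : ∀ n, ∀ F : Finset (List Bool), (∀ w ∈ F, w.length ≤ n) →
      (∀ w ∈ F, ∀ v ∈ F, w <+: v → w = v) → ∑ w ∈ F, (2⁻¹ : ℝ≥0∞) ^ w.length ≤ 1 from
    bounded_length _ F (fun w hw => Finset.le_sup (f := List.length) hw) hF
  have of_subset_nil : ∀ F : Finset (List Bool), F ⊆ {[]} →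
      ∑ w ∈ F, (2⁻¹ : ℝ≥0∞) ^ w.length ≤ 1 := fun F hF =>
    (Finset.sum_le_sum_of_subset hF).trans (by simp)
  intro n
  induction n with
  | zero =>
    exact fun F hlen _ => of_subset_nil F fun w hw => by simpa using hlen w hw
  | succ n ih =>
    intro F hlen hF
    by_cases hnil : [] ∈ F
    · exact of_subset_nil F fun w hw => by simp [← hF [] hnil w hw List.nil_prefix]
    let G (b : Bool) := F.preimage (List.cons b) List.cons_injective.injOn
    have hG : ∀ b, ∑ t ∈ G b, (2⁻¹ : ℝ≥0∞) ^ t.length ≤ 1 := fun b =>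
      ih (G b) (fun t ht => by simpa using hlen _ (Finset.mem_preimage.mp ht))
        fun t ht t' ht' h => List.cons_injective
          (hF _ (Finset.mem_preimage.mp ht) _ (Finset.mem_preimage.mp ht')
            (List.cons_prefix_cons.mpr ⟨rfl, h⟩))
    have hsub : F ⊆ (G true).image (List.cons true) ∪ (G false).image (List.cons false) := by
      intro w hw
      rcases w with _ | ⟨_ | _, t⟩
      · exact absurd hw hnil
      all_goals simpa [G] using hw
    have hdisj :
        Disjoint ((G true).image (List.cons true)) ((G false).image (List.cons false)) := by
      simp [Finset.disjoint_left]
    calc ∑ w ∈ F, (2⁻¹ : ℝ≥0∞) ^ w.length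
        ≤ ∑ w ∈ (G true).image (List.cons true) ∪ (G false).image (List.cons false),
            (2⁻¹ : ℝ≥0∞) ^ w.length := Finset.sum_le_sum_of_subset hsub
      _ = 2⁻¹ * ∑ t ∈ G true, (2⁻¹ : ℝ≥0∞) ^ t.length
            + 2⁻¹ * ∑ t ∈ G false, (2⁻¹ : ℝ≥0∞) ^ t.length := by
        rw [Finset.sum_union hdisj, Finset.sum_image List.cons_injective.injOn,
          Finset.sum_image List.cons_injective.injOn, Finset.mul_sum, Finset.mul_sum]
        simp [pow_succ, mul_comm]
      _ ≤ 2⁻¹ * 1 + 2⁻¹ * 1 := by gcongr <;> apply hG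
      _ = 1 := by simp [ENNReal.inv_two_add_inv_two]

/-- `prob N (1/2) x S` computed in `ℝ≥0∞`, where sums need no summability side conditions. -/
noncomputable def symProb (N : ℕ) (x : ℤ) (S : List Bool → Prop) : ℝ≥0∞ :=
  ∑' w : List Bool, Set.indicator {w | IsExitPath N x w ∧ S w} (fun w => 2⁻¹ ^ w.length) w

lemma symProb_le_one (N : ℕ) (x : ℤ) (S : List Bool → Prop) : symProb N x S ≤ 1 := by
  classical
  rw [symProb, ENNReal.tsum_eq_iSup_sum]
  refine iSup_le fun F => ?_
  rw [Finset.sum_indicator_eq_sum_filter]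
  refine sum_inv_two_pow_length_le_one fun w hw v hv => ?_
  exact (Finset.mem_filter.mp hw).2.1.eq_of_prefix (Finset.mem_filter.mp hv).2.1

lemma symProb_ne_top (N : ℕ) (x : ℤ) (S : List Bool → Prop) : symProb N x S ≠ ⊤ :=
  ne_top_of_le_ne_top ENNReal.one_ne_top (symProb_le_one N x S)

lemma prob_half_eq_toReal_symProb (N : ℕ) (x : ℤ) (S : List Bool → Prop) :
    prob N (1/2) x S = (symProb N x S).toReal := by
  have hwt : ∀ w, wt (1/2) w = ((2⁻¹ : ℝ≥0∞) ^ w.length).toReal := fun w => by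
    rw [wt, ENNReal.toReal_pow, ← List.count_false_add_count_true w, pow_add]
    norm_num [mul_comm]
  classical
  rw [prob, symProb, ENNReal.tsum_toReal_eq fun w => ?_]
  · refine tsum_congr fun w => ?_
    simp only [Set.indicator_apply, hwt]
    split_ifs <;> simp
  · simp only [Set.indicator_apply]
    split_ifs <;> simp

lemma symProb_eq_avg {N : ℕ} {x : ℤ} (hx0 : 0 < x) (hxN : x < N) (S : List Bool → Prop) :
    symProb N x S = 2⁻¹ * symProb N (x + 1) (fun w => S (true :: w))
      + 2⁻¹ * symProb N (x - 1) (fun w => S (false :: w)) := by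
  set f := Set.indicator {w | IsExitPath N x w ∧ S w} (fun w => (2⁻¹ : ℝ≥0∞) ^ w.length)
  have hcons : ∑' w, f w = ∑' q : Bool × List Bool, f (q.1 :: q.2) := by
    refine (Function.Injective.tsum_eq (fun q q' h => ?_) fun w hw => ?_).symm
    · obtain ⟨h1, h2⟩ := List.cons.inj h
      exact Prod.ext h1 h2
    · rcases w with _ | ⟨b, t⟩
      · refine absurd (Set.indicator_of_notMem ?_ _) hw
        rintro ⟨h, -⟩
        rcases isExitPath_nil_iff.mp h with h | h <;> omega
      · exact ⟨(b, t), rfl⟩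
  have hstep : ∀ b, ∑' t, f (b :: t) =
      2⁻¹ * symProb N (x + walkStep b) (fun w => S (b :: w)) := fun b => by
    classical
    rw [symProb, ← ENNReal.tsum_mul_left]
    refine tsum_congr fun t => ?_
    simp only [f, Set.indicator_apply, Set.mem_ofPred_eq, isExitPath_cons_iff hx0 hxN]
    split_ifs <;> simp [pow_succ, mul_comm]
  rw [symProb, hcons, ENNReal.tsum_prod', tsum_bool, hstep, hstep, add_comm]
  simp [walkStep, sub_eq_add_neg]

lemma prob_half_eq_avg {N : ℕ} {x : ℤ} (hx0 : 0 < x) (hxN : x < N) (S : List Bool → Prop) :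
    2 * prob N (1/2) x S = prob N (1/2) (x - 1) (fun w => S (false :: w))
      + prob N (1/2) (x + 1) (fun w => S (true :: w)) := by
  simp only [prob_half_eq_toReal_symProb]
  rw [symProb_eq_avg hx0 hxN,
    ENNReal.toReal_add (ENNReal.mul_ne_top (by simp) (symProb_ne_top _ _ _))
      (ENNReal.mul_ne_top (by simp) (symProb_ne_top _ _ _))]
  simp only [ENNReal.toReal_mul, ENNReal.toReal_inv, ENNReal.toReal_ofNat]
  ring

lemma prob_of_boundary {N : ℕ} {p : ℝ} {x : ℤ} (hx : x = 0 ∨ x = N) (S : List Bool → Prop)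
    [Decidable (S [])] :
    prob N p x S = if S [] then 1 else 0 := by
  rw [prob, tsum_eq_single [] fun w hw => Set.indicator_of_notMem (fun h => hw
    (h.1.eq_nil_of_boundary hx)) _]
  by_cases h : S []
  · rw [if_pos h, Set.indicator_of_mem
      (show [] ∈ {w | IsExitPath N x w ∧ S w} from ⟨isExitPath_nil_iff.mpr hx, h⟩)]
    simp [wt]
  · rw [if_neg h, Set.indicator_of_notMem fun hm => h hm.2]

lemma prob_congr {N : ℕ} {p : ℝ} {x : ℤ} {S T : List Bool → Prop}
    (h : ∀ w, IsExitPath N x w → (S w ↔ T w)) : prob N p x S = prob N p x T := by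
  rw [prob, prob, Set.ext fun w => and_congr_right (h w)]

theorem eq_affine_of_two_mul_eq_add {g : ℤ → ℝ} {a b : ℤ}
    (hg : ∀ x, a < x → x < b → 2 * g x = g (x - 1) + g (x + 1)) {x : ℤ} (hax : a ≤ x)
    (hxb : x ≤ b) : g x = g a + (g b - g a) * (x - a) / (b - a) := by
  set d := g (a + 1) - g a
  have hstep : ∀ y, (hay : a ≤ y) → y < b → g (y + 1) - g y = d := by
    intro y hay
    induction y, hay using Int.leInduction with
    | base => intro; rfl
    | succ y hay ih =>
      intro hyb
      have := hg (y + 1) (by omega) hyb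
      have := ih (by omega)
      rw [add_sub_cancel_right] at *
      linarith
  have hlin : ∀ y, (hay : a ≤ y) → y ≤ b → g y = g a + d * (y - a) := by
    intro y hay
    induction y, hay using Int.leInduction with
    | base => intro; simp
    | succ y hay ih =>
      intro hyb
      have := hstep y hay (by omega)
      rw [ih (by omega)] at this
      push_cast
      linarith
  rcases (hax.trans hxb).eq_or_lt with rfl | hab
  · simp [le_antisymm hxb hax]
  · rw [hlin x hax hxb, hlin b hab.le le_rfl]
    have : (b : ℝ) - a ≠ 0 := sub_ne_zero.mpr (by exact_mod_cast hab.ne')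
    field_simp
    ring

lemma prob_half_true {N : ℕ} {x : ℤ} (hx0 : 0 ≤ x) (hxN : x ≤ N) :
    prob N (1/2) x (fun _ => True) = 1 := by
  have h := eq_affine_of_two_mul_eq_add (g := fun x => prob N (1/2) x fun _ => True)
    (fun x hx0 hxN => prob_half_eq_avg hx0 hxN _) hx0 hxN
  simpa [prob_of_boundary (Or.inl rfl), prob_of_boundary (Or.inr rfl)] using h

noncomputable def visitProb (N : ℕ) (y x : ℤ) : ℝ :=
  prob N (1/2) x fun w => y ∈ rangeSet x w

lemma mem_rangeSet_cons {y x : ℤ} {b : Bool} {w : List Bool} :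
    y ∈ rangeSet x (b :: w) ↔ x = y ∨ y ∈ rangeSet (x + walkStep b) w := by
  simp only [rangeSet, Finset.mem_image, Finset.mem_range, List.length_cons]
  constructor
  · rintro ⟨_ | k, hk, rfl⟩
    · simp [walkPos]
    · exact Or.inr ⟨k, by omega, (walkPos_take_succ_cons ..).symm⟩
  · rintro (rfl | ⟨k, hk, rfl⟩)
    · exact ⟨0, by omega, by simp [walkPos]⟩
    · exact ⟨k + 1, by omega, walkPos_take_succ_cons ..⟩

lemma visitProb_self {N : ℕ} {y : ℤ} (hy0 : 0 ≤ y) (hyN : y ≤ N) : visitProb N y y = 1 := by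
  rw [visitProb, prob_congr fun w _ => iff_of_true ?_ trivial, prob_half_true hy0 hyN]
  exact Finset.mem_image.mpr ⟨0, by simp, by simp [walkPos]⟩

lemma visitProb_of_boundary {N : ℕ} {y x : ℤ} (hx : x = 0 ∨ x = N) (hxy : x ≠ y) :
    visitProb N y x = 0 := by
  simp [visitProb, prob_of_boundary hx, rangeSet, walkPos, hxy]

lemma visitProb_two_mul {N : ℕ} {y x : ℤ} (hx0 : 0 < x) (hxN : x < N) (hxy : x ≠ y) :
    2 * visitProb N y x = visitProb N y (x - 1) + visitProb N y (x + 1) := by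
  rw [visitProb, prob_half_eq_avg hx0 hxN]
  simp [visitProb, mem_rangeSet_cons, hxy, walkStep, sub_eq_add_neg]

lemma visitProb_of_le {N : ℕ} {y x : ℤ} (hy0 : 0 < y) (hyN : y ≤ N) (hx0 : 0 ≤ x)
    (hxy : x ≤ y) : visitProb N y x = x / y := by
  rw [eq_affine_of_two_mul_eq_add (g := visitProb N y)
      (fun x hx0 hxy => visitProb_two_mul hx0 (by omega) hxy.ne) hx0 hxy,
    visitProb_self hy0.le hyN, visitProb_of_boundary (Or.inl rfl) hy0.ne]
  simp

lemma visitProb_of_ge {N : ℕ} {y x : ℤ} (hy0 : 0 ≤ y) (hyN : y < N) (hyx : y ≤ x)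
    (hxN : x ≤ N) : visitProb N y x = (N - x) / (N - y) := by
  rw [eq_affine_of_two_mul_eq_add (g := visitProb N y)
      (fun x hyx hxN => visitProb_two_mul (by omega) hxN hyx.ne') hyx hxN,
    visitProb_self hy0 hyN.le, visitProb_of_boundary (Or.inr rfl) hyN.ne']
  have : (N : ℝ) - y ≠ 0 := sub_ne_zero.mpr (by exact_mod_cast hyN.ne')
  push_cast
  field_simp
  ring

lemma sum_range_tent {f : ℕ → ℝ} {m n : ℕ} (hm : 0 < m) (hn : 0 < n)
    (hup : ∀ x ≤ m, f x = x / m) (hdown : ∀ j < n, f (m + 1 + j) = (n - 1 - j) / n) :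
    ∑ x ∈ Finset.range (m + n + 1), f x = (m + n) / 2 := by
  have gauss : ∀ k : ℕ, ∑ i ∈ Finset.range k, (i : ℝ) = k * (k - 1) / 2 := fun k => by
    induction k with
    | zero => simp
    | succ k ih => rw [Finset.sum_range_succ, ih]; push_cast; ring
  rw [show m + n + 1 = (m + 1) + n by ring, Finset.sum_range_add,
    Finset.sum_congr rfl fun x hx => hup x (Nat.lt_succ_iff.mp (Finset.mem_range.mp hx)),
    Finset.sum_congr rfl fun j hj => hdown j (Finset.mem_range.mp hj),
    ← Finset.sum_div, ← Finset.sum_div, Finset.sum_sub_distrib, gauss, gauss]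
  simp only [Finset.sum_const, Finset.card_range, nsmul_eq_mul]
  have : (m : ℝ) ≠ 0 := by positivity
  have : (n : ℝ) ≠ 0 := by positivity
  push_cast
  field_simp
  ring

lemma probUniform_visit {N : ℕ} {y : ℤ} (hy0 : 0 < y) (hyN : y < N) :
    probUniform N (1/2) (fun x w => y ∈ rangeSet x w) = N / (N + 1) / 2 := by
  lift y to ℕ using hy0.le
  obtain ⟨n, rfl⟩ : ∃ n, N = y + n := ⟨N - y, by omega⟩
  change (∑ x ∈ Finset.range (y + n + 1), visitProb (y + n) y x) / _ = _
  rw [sum_range_tent (by omega) (by omega)]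
  · push_cast
    ring
  · intro x hx
    rw [visitProb_of_le hy0 (by omega) (by omega) (by omega)]
    push_cast
    ring
  · intro j hj
    rw [visitProb_of_ge (by omega) (by omega) (by omega) (by omega)]
    push_cast
    ring

/-- Remark 1.3 (symmetric case): for the symmetric walk started uniformly at random on
`{0, …, N}`, the probability that the site `⌊βN⌋` is visited before exit tends to
`1/2`. -/
theorem point_visited_uniform_symmetric (β : ℝ) (hβ0 : 0 < β) (hβ1 : β < 1) :
    Tendsto (fun N : ℕ => probUniform N (1/2)
        fun x w => (⌊β * (N : ℝ)⌋ : ℤ) ∈ rangeSet x w)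
      atTop (𝓝 (1/2)) := by
  have hlim : Tendsto (fun N : ℕ => (N : ℝ) / (N + 1) / 2) atTop (𝓝 (1/2)) := by
    simpa using (tendsto_natCast_div_add_atTop (1 : ℝ)).div_const 2
  have hlarge : ∀ᶠ N : ℕ in atTop, 1 ≤ β * N :=
    (tendsto_natCast_atTop_atTop.const_mul_atTop hβ0).eventually_ge_atTop 1
  refine hlim.congr' (hlarge.mono fun N hN => ?_)
  have hN0 : (0 : ℝ) < N := pos_of_mul_pos_right (one_pos.trans_le hN) hβ0.le
  refine (probUniform_visit (Int.floor_pos.mpr hN) (Int.floor_lt.mpr ?_)).symm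
  exact_mod_cast mul_lt_of_lt_one_left hN0 hβ1
end
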